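/- Let p = p(n) ∈ [0,1] satisfy n(1−p)^{8/5} → 0 or n√p → 0 as n → ∞. Then with probability tending to 1 as n → ∞, the Erdős–Rényi random graph G(n,p) is locally cochordal, and with probability tending to 1 it is locally 4-cochordal. (Equivalently, with high probability the edge ideal I(n,p) has local linear resolution and local linear presentation.) -/

import Mathlib

open Filter

/-- Probability weight of a given graph `G` under the Erdős–Rényi model `G(n,p)`:
each of the `n.choose 2` possible edges is present independently with probability `p`. -/
noncomputable def graphWeight (n : ℕ) (p : ℝ) (G : SimpleGraph (Fin n)) : ℝ :=
  p ^ Nat.card G.edgeSet * (1 - p) ^ (n.choose 2 - Nat.card G.edgeSet)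

/-- Probability of the event `A` under the Erdős–Rényi random graph `G(n,p)`. -/
noncomputable def erProb (n : ℕ) (p : ℝ) (A : Set (SimpleGraph (Fin n))) : ℝ :=
  ∑ G : SimpleGraph (Fin n), A.indicator (graphWeight n p) G

/-- `v : ZMod k → V` describes a chordless (induced) `k`-cycle of `G`:
it is injective, consecutive vertices are adjacent, and non-consecutive
vertices are non-adjacent. -/
def IsChordlessCycleOn {V : Type} (G : SimpleGraph V) {k : ℕ} (v : ZMod k → V) : Prop :=
  Function.Injective v ∧
    (∀ i : ZMod k, G.Adj (v i) (v (i + 1))) ∧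
    ∀ i j : ZMod k, i ≠ j → j ≠ i + 1 → i ≠ j + 1 → ¬G.Adj (v i) (v j)

/-- A graph is 4-chordal if every cycle of length 4 has a chord, i.e. there is
no chordless 4-cycle. -/
def FourChordal {V : Type} (G : SimpleGraph V) : Prop :=
  ¬∃ v : ZMod 4 → V, IsChordlessCycleOn G v

/-- A graph is chordal if every cycle of length at least 4 has a chord, i.e. there is
no chordless cycle of length at least 4. -/
def Chordal {V : Type} (G : SimpleGraph V) : Prop :=
  ∀ k : ℕ, 4 ≤ k → ¬∃ v : ZMod k → V, IsChordlessCycleOn G v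

/-- A graph is locally cochordal if, for every vertex `v`, the induced subgraph on the
vertices outside the closed neighborhood of `v` has chordal complement. -/
def LocallyCochordal {V : Type} (G : SimpleGraph V) : Prop :=
  ∀ v : V, Chordal ((G.induce {u | u ≠ v ∧ ¬G.Adj v u})ᶜ)

/-- A graph is locally 4-cochordal if, for every vertex `v`, the induced subgraph on the
vertices outside the closed neighborhood of `v` has 4-chordal complement. -/
def LocallyFourCochordal {V : Type} (G : SimpleGraph V) : Prop :=
  ∀ v : V, FourChordal ((G.induce {u | u ≠ v ∧ ¬G.Adj v u})ᶜ)


/-!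
If `G` is not locally cochordal, a vertex `v` together with a chordless cycle of length `k ≥ 4`
in the complement of `G` restricted to the non-neighbours of `v` forms a wheel with `k` spokes
in `Gᶜ`, i.e. `2k` distinct pairs that are all non-edges of `G`. A union bound over the
`n ^ (k + 1)` placements gives failure probability at most `∑_{k ≥ 4} n (n (1-p)²)^k`, which
is dominated by its first term `n⁵ (1-p)⁸ = (n (1-p)^{8/5})⁵`. When `n √p → 0`, the graph is
edgeless with probability `(1-p)^(n choose 2) ≥ 1 - n² p`, and an edgeless graph is locally
cochordal because every complement in question is complete.
-/

open Finset SimpleGraph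

open scoped Classical in
theorem SimpleGraph.sum_edgeFinset_eq_sum_powerset {V R : Type*} [Fintype V] [DecidableEq V]
    [AddCommMonoid R] (f : Finset (Sym2 V) → R) :
    ∑ G : SimpleGraph V, f G.edgeFinset =
      ∑ s ∈ (⊤ : SimpleGraph V).edgeFinset.powerset, f s := by
  refine sum_nbij' (fun G => G.edgeFinset) (fun s => fromEdgeSet s) ?_ ?_ ?_ ?_ ?_
  · intro G _
    simpa using edgeFinset_mono (le_top : G ≤ ⊤)
  · simp
  · intro G _; simp
  · intro s hs
    rw [mem_powerset] at hs
    ext e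
    simp only [mem_edgeFinset, edgeSet_fromEdgeSet, Set.mem_sdiff, mem_coe, and_iff_left_iff_imp]
    exact fun he => not_isDiag_of_mem_edgeFinset (hs he)
  · intro G _; rfl

theorem Finset.sum_powerset_sdiff_pow_mul_pow {ι R : Type*} [DecidableEq ι] [CommSemiring R]
    {S U : Finset ι} (hSU : S ⊆ U) (a b : R) :
    ∑ s ∈ (U \ S).powerset, a ^ #s * b ^ (#U - #s) = b ^ #S * (a + b) ^ #(U \ S) := by
  rw [← sum_pow_mul_eq_add_pow, mul_sum]
  refine sum_congr rfl fun s hs => ?_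
  have hs := card_le_card (mem_powerset.1 hs)
  rw [card_sdiff_of_subset hSU] at hs ⊢
  have hSU := card_le_card hSU
  rw [mul_left_comm, ← pow_add]
  congr 2
  omega

theorem ZMod.natCast_ne_zero_of_pos_of_lt {m k : ℕ} (h0 : 0 < m) (hm : m < k) :
    (m : ZMod k) ≠ 0 :=
  (ZMod.natCast_eq_zero_iff m k).not.2 (Nat.not_dvd_of_pos_of_lt h0 hm)

section Wheel

variable {V : Type*} {k : ℕ}

def IsWheel (H : SimpleGraph V) (v : V) (w : ZMod k → V) : Prop :=
  Function.Injective w ∧ ∀ i, H.Adj v (w i) ∧ H.Adj (w i) (w (i + 1))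

def wheelEdges [NeZero k] [DecidableEq V] (v : V) (w : ZMod k → V) : Finset (Sym2 V) :=
  univ.image (fun i => s(v, w i)) ∪ univ.image (fun i => s(w i, w (i + 1)))

variable [NeZero k] [DecidableEq V] {H : SimpleGraph V} {v : V} {w : ZMod k → V}

theorem IsWheel.wheelEdges_subset_edgeSet (hw : IsWheel H v w) :
    ↑(wheelEdges v w) ⊆ H.edgeSet := by
  intro e he
  simp only [wheelEdges, coe_union, coe_image, coe_univ, Set.image_univ, Set.mem_union,
    Set.mem_range] at he
  rcases he with ⟨i, rfl⟩ | ⟨i, rfl⟩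
  exacts [(hw.2 i).1, (hw.2 i).2]

theorem IsWheel.card_wheelEdges (hw : IsWheel H v w) (hk : 3 ≤ k) :
    #(wheelEdges v w) = 2 * k := by
  obtain ⟨hinj, hadj⟩ := hw
  have hv : ∀ i, w i ≠ v := fun i h => (hadj i).1.ne h.symm
  have hspokes : Function.Injective fun i => s(v, w i) := by
    intro i j h
    rcases Sym2.eq_iff.1 h with ⟨-, h⟩ | ⟨h, -⟩
    exacts [hinj h, absurd h.symm (hv j)]
  have hrim : Function.Injective fun i => s(w i, w (i + 1)) := by
    intro i j h
    rcases Sym2.eq_iff.1 h with ⟨h, -⟩ | ⟨h₁, h₂⟩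
    · exact hinj h
    · have hi := hinj h₁
      have hj := hinj h₂
      refine absurd ?_ (ZMod.natCast_ne_zero_of_pos_of_lt (m := 2) two_pos hk)
      push_cast
      linear_combination hj - hi
  have hdisj : Disjoint (univ.image fun i => s(v, w i))
      (univ.image fun i => s(w i, w (i + 1))) := by
    simp only [Finset.disjoint_left, mem_image, mem_univ, true_and, not_exists, forall_exists_index,
      forall_apply_eq_imp_iff]
    intro i j h
    rcases Sym2.eq_iff.1 h with ⟨h, -⟩ | ⟨-, h⟩
    exacts [hv j h, hv (j + 1) h]
  rw [wheelEdges, card_union_of_disjoint hdisj, card_image_of_injective _ hspokes,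
    card_image_of_injective _ hrim, card_univ, ZMod.card]
  ring

end Wheel

section Cochordal

variable {V : Type}

theorem chordal_top : Chordal (⊤ : SimpleGraph V) := by
  rintro k hk ⟨v, hinj, -, hchord⟩
  have h1 := ZMod.natCast_ne_zero_of_pos_of_lt (m := 1) one_pos (by omega : 1 < k)
  have h2 := ZMod.natCast_ne_zero_of_pos_of_lt (m := 2) two_pos (by omega : 2 < k)
  have h3 := ZMod.natCast_ne_zero_of_pos_of_lt (m := 3) three_pos (by omega : 3 < k)
  push_cast at h1 h2 h3
  refine hchord 0 2 (Ne.symm h2) (fun h => h1 ?_) (fun h => h3 ?_) ?_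
  · linear_combination h
  · linear_combination -h
  · exact (top_adj _ _).2 (hinj.ne (Ne.symm h2))

theorem locallyCochordal_bot : LocallyCochordal (⊥ : SimpleGraph V) := by
  intro v
  simpa using chordal_top

theorem LocallyCochordal.locallyFourCochordal {G : SimpleGraph V} (h : LocallyCochordal G) :
    LocallyFourCochordal G :=
  fun v => h v 4 le_rfl

theorem exists_isWheel_compl_of_not_locallyCochordal [Fintype V] {G : SimpleGraph V}
    (h : ¬LocallyCochordal G) :
    ∃ k ∈ Icc 4 (Fintype.card V), ∃ (v : V) (w : ZMod k → V), IsWheel Gᶜ v w := by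
  simp only [LocallyCochordal, Chordal, not_forall, not_not] at h
  obtain ⟨v, k, hk, c, hinj, hcycle, -⟩ := h
  have : NeZero k := ⟨by omega⟩
  have hw : IsWheel Gᶜ v fun i => (c i : V) := by
    refine ⟨Subtype.val_injective.comp hinj, fun i => ⟨?_, ?_⟩⟩
    · obtain ⟨hne, hnadj⟩ := (c i).2
      exact (compl_adj G _ _).2 ⟨hne.symm, hnadj⟩
    · obtain ⟨hne, hnadj⟩ := (compl_adj _ _ _).1 (hcycle i)
      exact (compl_adj G _ _).2 ⟨Subtype.val_injective.ne hne, hnadj⟩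
  refine ⟨k, mem_Icc.2 ⟨hk, ?_⟩, v, _, hw⟩
  simpa using Fintype.card_le_of_injective _ hw.1

end Cochordal

section ErdosRenyi

variable {n : ℕ} {p : ℝ}

open scoped Classical in
theorem graphWeight_eq (G : SimpleGraph (Fin n)) :
    graphWeight n p G =
      p ^ #G.edgeFinset * (1 - p) ^ (#(⊤ : SimpleGraph (Fin n)).edgeFinset - #G.edgeFinset) := by
  rw [graphWeight, card_edgeFinset_top_eq_card_choose_two, Fintype.card_fin,
    Nat.card_eq_fintype_card, edgeFinset_card]

theorem erProb_forall_notMem_edgeSet {S : Finset (Sym2 (Fin n))} (hS : ∀ e ∈ S, ¬e.IsDiag) :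
    erProb n p {G | ∀ e ∈ S, e ∉ G.edgeSet} = (1 - p) ^ #S := by
  classical
  set U := (⊤ : SimpleGraph (Fin n)).edgeFinset
  have hSU : S ⊆ U := fun e he => by
    simpa [U, edgeFinset_top] using hS e he
  have hfilter : {s ∈ U.powerset | Disjoint s S} = (U \ S).powerset := by
    ext s; simp [subset_sdiff]
  calc erProb n p {G | ∀ e ∈ S, e ∉ G.edgeSet}
      = ∑ G : SimpleGraph (Fin n), if Disjoint G.edgeFinset S
          then p ^ #G.edgeFinset * (1 - p) ^ (#U - #G.edgeFinset) else 0 := by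
        refine sum_congr rfl fun G _ => ?_
        simp only [Set.indicator_apply, Set.mem_ofPred_eq, graphWeight_eq, disjoint_right,
          mem_edgeFinset, U]
    _ = ∑ s ∈ (U \ S).powerset, p ^ #s * (1 - p) ^ (#U - #s) := by
        rw [sum_edgeFinset_eq_sum_powerset (fun s => if Disjoint s S
          then p ^ #s * (1 - p) ^ (#U - #s) else 0), ← sum_filter, hfilter]
    _ = (1 - p) ^ #S := by
        rw [sum_powerset_sdiff_pow_mul_pow hSU, add_sub_cancel, one_pow, mul_one]

theorem erProb_univ : erProb n p Set.univ = 1 := by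
  simpa using erProb_forall_notMem_edgeSet (n := n) (p := p) (S := ∅) (by simp)

theorem graphWeight_nonneg (hp : p ∈ Set.Icc (0 : ℝ) 1) (G : SimpleGraph (Fin n)) :
    0 ≤ graphWeight n p G :=
  mul_nonneg (pow_nonneg hp.1 _) (pow_nonneg (sub_nonneg.2 hp.2) _)

theorem erProb_mono (hp : p ∈ Set.Icc (0 : ℝ) 1) {A B : Set (SimpleGraph (Fin n))}
    (hAB : A ⊆ B) :
    erProb n p A ≤ erProb n p B :=
  sum_le_sum fun G _ => Set.indicator_le_indicator_of_subset hAB (graphWeight_nonneg hp) G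

theorem erProb_le_one (hp : p ∈ Set.Icc (0 : ℝ) 1) (A : Set (SimpleGraph (Fin n))) :
    erProb n p A ≤ 1 :=
  erProb_univ (p := p) ▸ erProb_mono hp (Set.subset_univ A)

theorem erProb_add_erProb_compl (A : Set (SimpleGraph (Fin n))) :
    erProb n p A + erProb n p Aᶜ = 1 := by
  rw [← erProb_univ (n := n) (p := p), erProb, erProb, erProb, ← sum_add_distrib]
  simp_rw [Set.indicator_self_add_compl_apply, Set.indicator_univ]

theorem erProb_union_le (hp : p ∈ Set.Icc (0 : ℝ) 1) (A B : Set (SimpleGraph (Fin n))) :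
    erProb n p (A ∪ B) ≤ erProb n p A + erProb n p B := by
  rw [erProb, erProb, erProb, ← sum_add_distrib]
  refine sum_le_sum fun G _ => ?_
  rw [← Set.indicator_union_add_inter_apply]
  exact le_add_of_nonneg_right (Set.indicator_nonneg (fun G _ => graphWeight_nonneg hp G) G)

theorem erProb_biUnion_le (hp : p ∈ Set.Icc (0 : ℝ) 1) {ι : Type*} (I : Finset ι)
    (B : ι → Set (SimpleGraph (Fin n))) :
    erProb n p (⋃ i ∈ I, B i) ≤ ∑ i ∈ I, erProb n p (B i) := by
  classical
  induction I using Finset.induction_on with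
  | empty => simp [erProb]
  | insert i I hi ih =>
    rw [set_biUnion_insert, sum_insert hi]
    exact (erProb_union_le hp _ _).trans (by gcongr)

theorem erProb_isWheel_compl_le (hp : p ∈ Set.Icc (0 : ℝ) 1) {k : ℕ} [NeZero k] (hk : 3 ≤ k)
    (v : Fin n) (w : ZMod k → Fin n) :
    erProb n p {G | IsWheel Gᶜ v w} ≤ (1 - p) ^ (2 * k) := by
  rcases Set.eq_empty_or_nonempty {G : SimpleGraph (Fin n) | IsWheel Gᶜ v w} with
    h | ⟨G₀, hG₀⟩
  · rw [h, erProb]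
    simpa using pow_nonneg (sub_nonneg.2 hp.2) _
  have hS : ∀ e ∈ wheelEdges v w, ¬e.IsDiag := fun e he =>
    G₀ᶜ.not_isDiag_of_mem_edgeSet (hG₀.wheelEdges_subset_edgeSet he)
  calc erProb n p {G | IsWheel Gᶜ v w}
      ≤ erProb n p {G | ∀ e ∈ wheelEdges v w, e ∉ G.edgeSet} := by
        refine erProb_mono hp fun G hG e he => ?_
        exact Set.disjoint_right.1 (disjoint_edgeSet.2 disjoint_compl_right)
          (hG.wheelEdges_subset_edgeSet he)
    _ = (1 - p) ^ (2 * k) := by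
        rw [erProb_forall_notMem_edgeSet hS, hG₀.card_wheelEdges hk]

theorem erProb_exists_isWheel_compl_le (hp : p ∈ Set.Icc (0 : ℝ) 1) {k : ℕ} (hk : 3 ≤ k) :
    erProb n p {G | ∃ (v : Fin n) (w : ZMod k → Fin n), IsWheel Gᶜ v w} ≤
      n * (n * (1 - p) ^ 2) ^ k := by
  have : NeZero k := ⟨by omega⟩
  calc erProb n p {G | ∃ (v : Fin n) (w : ZMod k → Fin n), IsWheel Gᶜ v w}
      = erProb n p (⋃ x ∈ (univ : Finset (Fin n × (ZMod k → Fin n))),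
          {G | IsWheel Gᶜ x.1 x.2}) := by
        congr 1; ext G; simp
    _ ≤ ∑ x : Fin n × (ZMod k → Fin n), erProb n p {G | IsWheel Gᶜ x.1 x.2} :=
        erProb_biUnion_le hp _ _
    _ ≤ ∑ _x : Fin n × (ZMod k → Fin n), (1 - p) ^ (2 * k) :=
        sum_le_sum fun x _ => erProb_isWheel_compl_le hp hk x.1 x.2
    _ = n * (n * (1 - p) ^ 2) ^ k := by
        simp only [sum_const, card_univ, Fintype.card_prod, Fintype.card_fun, ZMod.card,
          Fintype.card_fin, nsmul_eq_mul]
        push_cast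
        rw [mul_pow, ← pow_mul]
        ring

theorem erProb_compl_locallyCochordal_le (hp : p ∈ Set.Icc (0 : ℝ) 1)
    (hr : n * (1 - p) ^ 2 < 1) :
    erProb n p {G | LocallyCochordal G}ᶜ ≤
      n * (n * (1 - p) ^ 2) ^ 4 / (1 - n * (1 - p) ^ 2) := by
  set r : ℝ := n * (1 - p) ^ 2
  calc erProb n p {G | LocallyCochordal G}ᶜ
      ≤ erProb n p (⋃ k ∈ Icc 4 n,
          {G | ∃ (v : Fin n) (w : ZMod k → Fin n), IsWheel Gᶜ v w}) := by
        refine erProb_mono hp fun G hG => ?_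
        obtain ⟨k, hk, v, w, hw⟩ := exists_isWheel_compl_of_not_locallyCochordal hG
        rw [Fintype.card_fin] at hk
        exact Set.mem_biUnion hk ⟨v, w, hw⟩
    _ ≤ ∑ k ∈ Icc 4 n, n * r ^ k :=
        (erProb_biUnion_le hp _ _).trans (sum_le_sum fun k hk =>
          erProb_exists_isWheel_compl_le hp (by linarith [(mem_Icc.1 hk).1]))
    _ ≤ n * (r ^ 4 / (1 - r)) := by
        rw [← mul_sum]
        gcongr
        exact geom_sum_Ico_le_of_lt_one (by positivity) hr
    _ = n * r ^ 4 / (1 - r) := mul_div_assoc _ _ _ |>.symm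

theorem one_sub_sq_mul_le_erProb_locallyCochordal (hp : p ∈ Set.Icc (0 : ℝ) 1) :
    1 - n ^ 2 * p ≤ erProb n p {G | LocallyCochordal G} := by
  classical
  set U := (⊤ : SimpleGraph (Fin n)).edgeFinset
  have hbot :
      {G : SimpleGraph (Fin n) | ∀ e ∈ U, e ∉ G.edgeSet} ⊆ {G | LocallyCochordal G} := by
    intro G hG
    obtain rfl : G = ⊥ := edgeSet_eq_empty.1 <| Set.eq_empty_of_forall_notMem fun e he =>
      hG e (by simpa [U] using G.not_isDiag_of_mem_edgeSet he) he
    exact locallyCochordal_bot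
  calc 1 - n ^ 2 * p ≤ 1 + #U * (-p) := by
        have : (#U : ℝ) ≤ n ^ 2 := by
          rw [card_edgeFinset_top_eq_card_choose_two, Fintype.card_fin]
          exact_mod_cast Nat.choose_le_pow n 2
        nlinarith [hp.1]
    _ ≤ (1 + -p) ^ #U := one_add_mul_le_pow (by linarith [hp.2]) _
    _ = erProb n p {G | ∀ e ∈ U, e ∉ G.edgeSet} := by
        rw [erProb_forall_notMem_edgeSet fun e he => not_isDiag_of_mem_edgeFinset he,
          sub_eq_add_neg]
    _ ≤ erProb n p {G | LocallyCochordal G} := erProb_mono hp hbot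

theorem one_sub_pow_div_le_erProb_locallyCochordal (hp : p ∈ Set.Icc (0 : ℝ) 1)
    (hb : n * (1 - p) ^ ((8 : ℝ) / 5) < 1) :
    1 - (n * (1 - p) ^ ((8 : ℝ) / 5)) ^ 5 / (1 - n * (1 - p) ^ ((8 : ℝ) / 5)) ≤
      erProb n p {G | LocallyCochordal G} := by
  set b : ℝ := n * (1 - p) ^ ((8 : ℝ) / 5)
  have hq : 0 ≤ 1 - p := sub_nonneg.2 hp.2
  have hrb : n * (1 - p) ^ 2 ≤ b := by
    refine mul_le_mul_of_nonneg_left ?_ (Nat.cast_nonneg n)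
    exact_mod_cast Real.rpow_le_rpow_of_exponent_ge' hq (by linarith [hp.1]) (by norm_num)
      (by norm_num : (8 : ℝ) / 5 ≤ (2 : ℕ))
  have hb5 : n * (n * (1 - p) ^ 2) ^ 4 = b ^ 5 := by
    rw [show b = _ from rfl, mul_pow, mul_pow, ← Real.rpow_natCast ((1 - p) ^ ((8 : ℝ) / 5)) 5,
      ← Real.rpow_mul hq]
    norm_num
    ring
  have hbad := hb5 ▸ erProb_compl_locallyCochordal_le hp (hrb.trans_lt hb)
  have hdiv : b ^ 5 / (1 - n * (1 - p) ^ 2) ≤ b ^ 5 / (1 - b) := by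
    gcongr
  linarith [erProb_add_erProb_compl (n := n) (p := p) {G | LocallyCochordal G}]

end ErdosRenyi

theorem tendsto_nhds_one_of_one_sub_le {α : Type*} {l : Filter α} {a ε : α → ℝ}
    (hε : Tendsto ε l (nhds 0)) (hlow : ∀ᶠ x in l, 1 - ε x ≤ a x) (hup : ∀ x, a x ≤ 1) :
    Tendsto a l (nhds 1) := by
  refine tendsto_of_tendsto_of_tendsto_of_le_of_le' ?_ tendsto_const_nhds hlow
    (Eventually.of_forall hup)
  simpa using hε.const_sub 1

theorem tendsto_erProb_locallyCochordal_of_dense {p : ℕ → ℝ}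
    (hp : ∀ n, p n ∈ Set.Icc (0 : ℝ) 1)
    (h : Tendsto (fun n : ℕ => (n : ℝ) * (1 - p n) ^ ((8 : ℝ) / 5)) atTop (nhds 0)) :
    Tendsto (fun n => erProb n (p n) {G | LocallyCochordal G}) atTop (nhds 1) := by
  have hε := (h.pow 5).div (h.const_sub 1) (by norm_num : (1 : ℝ) - 0 ≠ 0)
  rw [zero_pow (by norm_num), zero_div] at hε
  refine tendsto_nhds_one_of_one_sub_le hε ?_ fun n => erProb_le_one (hp n) _
  filter_upwards [(tendsto_order.1 h).2 1 one_pos] with n hb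
  exact one_sub_pow_div_le_erProb_locallyCochordal (hp n) hb

theorem tendsto_erProb_locallyCochordal_of_sparse {p : ℕ → ℝ}
    (hp : ∀ n, p n ∈ Set.Icc (0 : ℝ) 1)
    (h : Tendsto (fun n : ℕ => (n : ℝ) * Real.sqrt (p n)) atTop (nhds 0)) :
    Tendsto (fun n => erProb n (p n) {G | LocallyCochordal G}) atTop (nhds 1) := by
  refine tendsto_nhds_one_of_one_sub_le (by simpa using h.pow 2) (Eventually.of_forall fun n => ?_)
    fun n => erProb_le_one (hp n) _
  rw [mul_pow, Real.sq_sqrt (hp n).1]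
  exact one_sub_sq_mul_le_erProb_locallyCochordal (hp n)

/-- If `n (1-p)^{8/5} → 0` or `n √p → 0`, then with high probability `G(n,p)` is
locally cochordal and locally 4-cochordal (equivalently, the edge ideal `I(n,p)` has
local linear resolution and local linear presentation). -/
theorem locally_cochordal_whp (p : ℕ → ℝ) (hp : ∀ n, p n ∈ Set.Icc (0 : ℝ) 1)
    (h : Tendsto (fun n : ℕ => (n : ℝ) * (1 - p n) ^ ((8 : ℝ) / 5)) atTop (nhds 0) ∨
      Tendsto (fun n : ℕ => (n : ℝ) * Real.sqrt (p n)) atTop (nhds 0)) :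
    Tendsto (fun n : ℕ => erProb n (p n) {G | LocallyCochordal G}) atTop (nhds 1) ∧
    Tendsto (fun n : ℕ => erProb n (p n) {G | LocallyFourCochordal G}) atTop (nhds 1) := by
  have hLC : Tendsto (fun n => erProb n (p n) {G | LocallyCochordal G}) atTop (nhds 1) :=
    h.elim (tendsto_erProb_locallyCochordal_of_dense hp)
      (tendsto_erProb_locallyCochordal_of_sparse hp)
  exact ⟨hLC, tendsto_of_tendsto_of_tendsto_of_le_of_le hLC tendsto_const_nhds
    (fun n => erProb_mono (hp n) fun _ => LocallyCochordal.locallyFourCochordal)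
    fun n => erProb_le_one (hp n) _⟩
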